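/- arXiv:1107.4073 — 2 statements merged into one kernel-verified Lean document; each statement's English description precedes it below -/
import Mathlib

section
/- Let w be a binary word of length n, let p ≠ q be unmatched positions of w both carrying the letter 1, and let {a, b} be a matched pair of w. Then the pair {p, q} does not cross the pair {a, b}. -/
/-!
Common definitions: binary words of length `n`, rotations, necklaces (the quotient
poset `Bₙ/Cₙ`), the cyclic matching procedure, Lyndon words, the map `φ`,
crossing pairs, and the words `w_t`.

Throughout, a binary word of length `n` is a function `Fin n → Bool`, where `true`
encodes the letter `1` and `false` the letter `0`.
-/

/-- A binary word of length `n`: `true` encodes the letter `1`, `false` the letter `0`. -/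
abbrev Word (n : ℕ) := Fin n → Bool

variable {n : ℕ} [NeZero n]

/-- The rotation `σ_i`, shifting the letters of `w` cyclically by `i` positions (so the
letter at position `j` of `w` appears at position `j + i` of `rot i w`). -/
def rot (i : Fin n) (w : Word n) : Word n := fun j => w (j - i)

lemma rot_rot (i j : Fin n) (w : Word n) : rot i (rot j w) = rot (j + i) w := by
  funext k
  simp [rot, sub_sub, add_comm]

/-- Two words are equivalent when one is a cyclic rotation of the other. -/
def rotSetoid (n : ℕ) [NeZero n] : Setoid (Word n) where
  r w w' := ∃ i : Fin n, rot i w = w'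
  iseqv := by
    refine ⟨fun w => ⟨0, ?_⟩, ?_, ?_⟩
    · funext j; simp [rot]
    · rintro w w' ⟨i, rfl⟩
      refine ⟨-i, ?_⟩
      rw [rot_rot]
      funext j; simp [rot]
    · rintro w w' w'' ⟨i, rfl⟩ ⟨j, rfl⟩
      exact ⟨i + j, (rot_rot j i w).symm⟩

/-- A necklace: an equivalence class of binary words under cyclic rotation. -/
abbrev Necklace (n : ℕ) [NeZero n] := Quotient (rotSetoid n)

/-- The necklace of a word. -/
def nec (w : Word n) : Necklace n := Quotient.mk (rotSetoid n) w

/-- The number of `1`s in a word. -/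
def wt (w : Word n) : ℕ := (Finset.univ.filter fun i => w i = true).card

/-- The number of `0`s in a word. -/
def zeros (w : Word n) : ℕ := (Finset.univ.filter fun i => w i = false).card

/-- The rank of a necklace: the number of `1`s in any representative. -/
noncomputable def rank (u : Necklace n) : ℕ := wt (Quotient.out u)

/-- The set of positions belonging to some pair of `M`. -/
def matchedPos (M : Finset (Fin n × Fin n)) : Finset (Fin n) :=
  M.image Prod.fst ∪ M.image Prod.snd

/-- `j` is the first position outside `S` encountered strictly after `i` in the cyclic
order `i+1, i+2, …` (indices mod `n`). -/
def FirstAfter (S : Finset (Fin n)) (i j : Fin n) : Prop :=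
  j ∉ S ∧ j ≠ i ∧ ∀ k : Fin n, k ∉ S → k ≠ i → (j - i).val ≤ (k - i).val

/-- One step of the cyclic matching procedure on the word `w`: choose an as-yet-unmatched
position `i` carrying the letter `0` such that the first as-yet-unmatched position `j`
after `i` in cyclic order carries the letter `1`, and declare `{i, j}` a matched pair
(recorded as the ordered pair `(i, j)`, the `0`-position first). -/
inductive MatchStep (w : Word n) :
    Finset (Fin n × Fin n) → Finset (Fin n × Fin n) → Prop
  | step {M : Finset (Fin n × Fin n)} {i j : Fin n}
      (hi : i ∉ matchedPos M) (hw : w i = false)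
      (hj : FirstAfter (matchedPos M) i j) (hj1 : w j = true) :
      MatchStep w M (insert (i, j) M)

/-- A maximal execution of the cyclic matching procedure on `w`, starting from the empty
matching: `M` is reachable from `∅` by matching steps and no further step is possible. -/
def IsMaximalMatching (w : Word n) (M : Finset (Fin n × Fin n)) : Prop :=
  Relation.ReflTransGen (MatchStep w) ∅ M ∧ ∀ M', ¬ MatchStep w M M'

/-- The cyclic matching of `w`: the set of matched pairs produced by (any) maximal
execution of the cyclic matching procedure. -/
noncomputable def matching (w : Word n) : Finset (Fin n × Fin n) :=
  letI := Classical.dec (∃ M, IsMaximalMatching w M)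
  if h : ∃ M, IsMaximalMatching w M then h.choose else ∅

/-- The unmatched positions of `w`: positions belonging to no matched pair. -/
noncomputable def unmatchedPos (w : Word n) : Finset (Fin n) :=
  Finset.univ \ matchedPos (matching w)

/-- Lexicographic comparison of words with respect to the letter order `1 ≺ 0`
(recall `true` encodes `1` and `false` encodes `0`). -/
def lexLE (w w' : Word n) : Prop :=
  w = w' ∨ ∃ i : Fin n, (∀ j : Fin n, j < i → w j = w' j) ∧ w i = true ∧ w' i = false

/-- A word is Lyndon if it is lexicographically smallest among all of its rotations,
with respect to the letter order `1 ≺ 0`. -/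
def IsLyndon (w : Word n) : Prop := ∀ i : Fin n, lexLE w (rot i w)

/-- The Lyndon rearrangement of `w`: its lexicographically smallest rotation. -/
noncomputable def lyndonOf (w : Word n) : Word n :=
  letI := Classical.dec (∃ i : Fin n, IsLyndon (rot i w))
  if h : ∃ i : Fin n, IsLyndon (rot i w) then rot h.choose w else w

/-- Change the letter at the rightmost unmatched position of `w` to `0`. -/
noncomputable def flipTop (w : Word n) : Word n :=
  if h : (unmatchedPos w).Nonempty then
    Function.update w ((unmatchedPos w).max' h) false
  else w

/-- The map `φ`: take the Lyndon rearrangement of a representative and change the letter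
at its rightmost unmatched position (which carries a `1` on the upper half of ranks)
to `0`. -/
noncomputable def phi (u : Necklace n) : Necklace n :=
  nec (flipTop (lyndonOf (Quotient.out u)))

/-- `x` lies strictly inside the cyclic arc running from `i` (exclusive) to `k`
(exclusive), in the cyclic order of positions. -/
def StrictBtw (i x k : Fin n) : Prop :=
  0 < (x - i).val ∧ (x - i).val < (k - i).val

/-- The pairs `{i, k}` and `{j, l}` cross: exactly one of `j, l` lies strictly inside one
of the two cyclic arcs determined by `i` and `k`. -/
def Crosses (i k j l : Fin n) : Prop := Xor' (StrictBtw i j k) (StrictBtw i l k)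

/-- `wT w t` is the word obtained from `w` by changing the letters at the last `t`
unmatched positions of `w` to `0`; that is, if the unmatched positions of `w` are
`p₁ < … < p_m`, the positions `p_{m-t+1}, …, p_m` are changed to `0`. -/
noncomputable def wT (w : Word n) (t : ℕ) : Word n := fun j =>
  if j ∈ unmatchedPos w ∧ ((unmatchedPos w).filter fun k => j ≤ k).card ≤ t then false
  else w j

/-- The order on necklaces (the poset `Bₙ/Cₙ`): `u ≤ v` iff there are representatives
`w` of `u` and `w'` of `v` such that every position carrying `1` in `w` also carries `1`
in `w'`. -/
def nle (u v : Necklace n) : Prop :=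
  ∃ w w' : Word n, nec w = u ∧ nec w' = v ∧ ∀ i, w i = true → w' i = true

/-- The strict order on necklaces. -/
def nlt (u v : Necklace n) : Prop := nle u v ∧ u ≠ v

/-- `v` covers `u` in `Bₙ/Cₙ`: `u < v` and there is no `z` with `u < z < v`. -/
def ncovBy (u v : Necklace n) : Prop := nlt u v ∧ ∀ z, nlt u z → ¬ nlt z v

/-- A chain top: a necklace `v` in the upper half of ranks (`2·rank v ≥ n`) which is not
the image under `φ` of any necklace in the strict upper half of ranks. -/
def IsChainTop (v : Necklace n) : Prop :=
  n ≤ 2 * rank v ∧ ∀ u : Necklace n, n < 2 * rank u → phi u ≠ v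

/-- The `φ`-string below the chain top `v`: the necklaces of the words `w_t`,
`0 ≤ t ≤ m`, where `w` is the Lyndon representative of `v` and `m = 2·rank v − n`. -/
noncomputable def chainOf (v : Necklace n) : Set (Necklace n) :=
  { u | ∃ t ≤ 2 * rank v - n, u = nec (wT (lyndonOf (Quotient.out v)) t) }

/-!
When a step of the procedure matches `i` with `j`, every position strictly inside the arc from
`i` to `j` is already matched, because `j` is the first unmatched position after `i`. So no
unmatched position lies inside the arc running from the `0` to the `1` of a matched pair, or at
its endpoints; two unmatched positions both lie on the complementary arc and cannot separate
the endpoints of the pair.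
-/

section CyclicMatching

variable {n : ℕ} {w : Word n} {M M' : Finset (Fin n × Fin n)}

lemma Fin.val_sub_eq_ite (x y : Fin n) :
    (x - y).val = if y.val ≤ x.val then x.val - y.val else n + x.val - y.val := by
  split_ifs with h
  · exact Fin.sub_val_of_le h
  · exact Fin.coe_sub_iff_lt.2 (not_le.1 h)

lemma not_crosses_of_strictBtw_subset {S : Set (Fin n)} {a b p q : Fin n}
    (ha : a ∈ S) (hb : b ∈ S) (harc : ∀ x, StrictBtw a x b → x ∈ S)
    (hp : p ∉ S) (hq : q ∉ S) : ¬ Crosses p q a b := by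
  have hpa : p.val ≠ a.val := Fin.val_ne_of_ne (ne_of_mem_of_not_mem ha hp).symm
  have hpb : p.val ≠ b.val := Fin.val_ne_of_ne (ne_of_mem_of_not_mem hb hp).symm
  have hqa : q.val ≠ a.val := Fin.val_ne_of_ne (ne_of_mem_of_not_mem ha hq).symm
  have hqb : q.val ≠ b.val := Fin.val_ne_of_ne (ne_of_mem_of_not_mem hb hq).symm
  have hp' : ¬ StrictBtw a p b := fun h => hp (harc p h)
  have hq' : ¬ StrictBtw a q b := fun h => hq (harc q h)
  have := p.isLt; have := q.isLt; have := a.isLt; have := b.isLt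
  change ¬ Xor (StrictBtw p a q) (StrictBtw p b q)
  simp only [xor_def, StrictBtw, Fin.val_sub_eq_ite] at hp' hq' ⊢
  split_ifs at hp' hq' ⊢ <;> omega

lemma matchedPos_mono (h : M ⊆ M') : matchedPos M ⊆ matchedPos M' :=
  Finset.union_subset_union (Finset.image_subset_image h) (Finset.image_subset_image h)

lemma fst_mem_matchedPos {pr : Fin n × Fin n} (h : pr ∈ M) : pr.1 ∈ matchedPos M :=
  Finset.mem_union_left _ (Finset.mem_image_of_mem _ h)

lemma snd_mem_matchedPos {pr : Fin n × Fin n} (h : pr ∈ M) : pr.2 ∈ matchedPos M :=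
  Finset.mem_union_right _ (Finset.mem_image_of_mem _ h)

def ArcsCovered (M : Finset (Fin n × Fin n)) : Prop :=
  ∀ ⦃a b : Fin n⦄, (a, b) ∈ M → ∀ ⦃x : Fin n⦄, StrictBtw a x b → x ∈ matchedPos M

lemma arcsCovered_empty : ArcsCovered (∅ : Finset (Fin n × Fin n)) := by
  simp [ArcsCovered]

lemma MatchStep.arcsCovered (hstep : MatchStep w M M') (hM : ArcsCovered M) :
    ArcsCovered M' := by
  obtain ⟨-, -, ⟨-, -, hfirst⟩, -⟩ := hstep
  intro a b hab x hx
  rcases Finset.mem_insert.mp hab with hnew | hold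
  · obtain ⟨rfl, rfl⟩ := Prod.mk.inj hnew
    refine matchedPos_mono (Finset.subset_insert _ _) (not_not.1 fun hx' => ?_)
    have hxa : x ≠ a := by rintro rfl; simp [StrictBtw, Fin.val_sub] at hx
    exact absurd (hfirst x hx' hxa) (not_le.2 hx.2)
  · exact matchedPos_mono (Finset.subset_insert _ _) (hM hold hx)

lemma arcsCovered_of_reflTransGen (h : Relation.ReflTransGen (MatchStep w) ∅ M) :
    ArcsCovered M := by
  induction h with
  | refl => exact arcsCovered_empty
  | tail _ hstep ih => exact hstep.arcsCovered ih

lemma arcsCovered_matching (w : Word n) : ArcsCovered (matching w) := by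
  unfold matching
  split
  case isTrue h => exact arcsCovered_of_reflTransGen h.choose_spec.1
  case isFalse => exact arcsCovered_empty

end CyclicMatching

theorem unmatched_pair_not_crossing_matched_general (n : ℕ) (w : Word n)
    (p q : Fin n) (hp : p ∈ unmatchedPos w) (hq : q ∈ unmatchedPos w)
    (ab : Fin n × Fin n) (hab : ab ∈ matching w) :
    ¬ Crosses p q ab.1 ab.2 := by
  obtain ⟨a, b⟩ := ab
  exact not_crosses_of_strictBtw_subset (S := ↑(matchedPos (matching w)))
    (fst_mem_matchedPos hab) (snd_mem_matchedPos hab)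
    (fun _ hx => arcsCovered_matching w hab hx)
    (Finset.mem_sdiff.mp hp).2 (Finset.mem_sdiff.mp hq).2

/-- If `p ≠ q` are unmatched positions of `w` both carrying the letter
`1`, and `{a, b}` is a matched pair of `w`, then the pair `{p, q}` does not cross the
pair `{a, b}`. -/
theorem unmatched_pair_not_crossing_matched (n : ℕ) [NeZero n] (w : Word n)
    (p q : Fin n) (hp : p ∈ unmatchedPos w) (hq : q ∈ unmatchedPos w) (hpq : p ≠ q)
    (hp1 : w p = true) (hq1 : w q = true)
    (ab : Fin n × Fin n) (hab : ab ∈ matching w) :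
    ¬ Crosses p q ab.1 ab.2 :=
  unmatched_pair_not_crossing_matched_general n w p q hp hq ab hab
end

section
/- Let n be odd and let u be a necklace of length n of rank (n+1)/2 with Lyndon rearrangement w. Then w has exactly one unmatched position p, carrying a 1; the word obtained from w by changing position p to 0 (a representative of φ(u)) has the same matched pairs as w and has p as its unique unmatched position, now carrying a 0. Consequently, φ is injective on the set of necklaces of rank (n+1)/2: the preimage of φ(u) is recovered by changing the unique unmatched 0 back to a 1. -/
variable {n : ℕ} [NeZero n]

/-!
A step of the cyclic matching only inspects its own two positions, and two different steps that
are possible at the same moment remain possible after each other; by Church–Rosser every maximal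
execution ends in the same matching. Matched letters come in `0`–`1` pairs, and a maximal
execution cannot leave both an unmatched `0` and an unmatched `1`: the unmatched `0` nearest
before that `1` could still be matched. On the middle rank there is one more `1` than `0`, so every
`0` is matched and exactly one `1` is left over. Changing it to `0` keeps every step of the
execution valid and leaves a single unmatched position, too few for another step, so the matching
is unchanged. Since matchings commute with rotations, the unique unmatched `0` of any
representative of `φ(u)` marks the letter to change back, which recovers `u`.
-/

open Finset Function Relation

section CyclicDistance

variable {m : ℕ}

lemma Fin.val_sub_eq_ite_s6 (a b : Fin m) :
    ((a - b : Fin m) : ℕ) = if (b : ℕ) ≤ a then (a : ℕ) - b else m + (a : ℕ) - b := by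
  split_ifs with h
  · exact Fin.coe_sub_iff_le.2 h
  · exact Fin.coe_sub_iff_lt.2 (not_le.1 h)

lemma Fin.val_sub_pos {a b : Fin m} (h : a ≠ b) : 0 < ((a - b : Fin m) : ℕ) := by
  have := Fin.val_ne_of_ne h
  rw [Fin.val_sub_eq_ite_s6]; split_ifs <;> omega

lemma Fin.val_sub_add_val_sub {a b c : Fin m}
    (h : ((b - a : Fin m) : ℕ) ≤ ((c - a : Fin m) : ℕ)) :
    ((c - b : Fin m) : ℕ) + ((b - a : Fin m) : ℕ) = ((c - a : Fin m) : ℕ) := by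
  have := a.isLt; have := b.isLt; have := c.isLt
  simp only [Fin.val_sub_eq_ite_s6] at h ⊢
  split_ifs at h ⊢ <;> omega

end CyclicDistance

namespace FirstAfter

variable {m : ℕ} {S T : Finset (Fin m)} {i i' j j' : Fin m}

lemma unique (h : FirstAfter S i j) (h' : FirstAfter S i j') : j = j' := by
  have d := (h.2.2 j' h'.1 h'.2.1).antisymm (h'.2.2 j h.1 h.2.1)
  have := i.isLt; have := j.isLt; have := j'.isLt
  simp only [Fin.val_sub_eq_ite_s6] at d
  ext; split_ifs at d <;> omega

lemma inj (h : FirstAfter S i j) (h' : FirstAfter S i' j) (hi : i ∉ S) (hi' : i' ∉ S) :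
    i = i' := by
  by_contra hne
  have hij : i' ≠ j := fun e => h'.2.1 e.symm
  have d := Fin.val_sub_add_val_sub (h.2.2 i' hi' (Ne.symm hne))
  have d' := Fin.val_sub_add_val_sub (h'.2.2 i hi hne)
  have := i.isLt; have := i'.isLt; have := j.isLt
  have := Fin.val_ne_of_ne hne; have := Fin.val_ne_of_ne hij; have := Fin.val_ne_of_ne h.2.1
  simp only [Fin.val_sub_eq_ite_s6] at d d'
  split_ifs at d d' <;> omega

lemma mono (h : FirstAfter S i j) (hST : S ⊆ T) (hj : j ∉ T) : FirstAfter T i j :=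
  ⟨hj, h.2.1, fun k hk => h.2.2 k fun hkS => hk (hST hkS)⟩

end FirstAfter

lemma exists_firstAfter {m : ℕ} {S : Finset (Fin m)} {i q : Fin m} (hq : q ∉ S)
    (hqi : q ≠ i) : ∃ j, FirstAfter S i j := by
  classical
  obtain ⟨j, hj, hmin⟩ := (univ.filter fun k => k ∉ S ∧ k ≠ i).exists_min_image
    (fun k => ((k - i : Fin m) : ℕ)) ⟨q, by simp [hq, hqi]⟩
  simp only [mem_filter, mem_univ, true_and] at hj hmin
  exact ⟨j, hj.1, hj.2, fun k hk hki => hmin k ⟨hk, hki⟩⟩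

section Matching

variable {m : ℕ} {w : Word m} {M M₁ M₂ M' : Finset (Fin m × Fin m)}

lemma matchedPos_insert (i j : Fin m) (M : Finset (Fin m × Fin m)) :
    matchedPos (insert (i, j) M) = insert i (insert j (matchedPos M)) := by
  ext x
  simp only [matchedPos, image_insert, mem_union, mem_insert]
  tauto

lemma matchedPos_image_prodMap (f : Fin m → Fin m) (M : Finset (Fin m × Fin m)) :
    matchedPos (M.image (Prod.map f f)) = (matchedPos M).image f := by
  simp only [matchedPos, image_union, image_image]
  rfl

lemma MatchStep.matchedPos_subset (h : MatchStep w M M') : matchedPos M ⊆ matchedPos M' := by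
  cases h
  rw [matchedPos_insert]
  exact (subset_insert _ _).trans (subset_insert _ _)

lemma MatchStep.card_lt (h : MatchStep w M M') : M.card < M'.card := by
  cases h with
  | step hi =>
    refine card_lt_card (ssubset_insert fun hM => hi ?_)
    exact mem_union_left _ (mem_image_of_mem _ hM)

lemma matchStep_insert_of_ne {i j i' j' : Fin m} (hi : i ∉ matchedPos M) (hw : w i = false)
    (hj : FirstAfter (matchedPos M) i j) (hj1 : w j = true)
    (hii' : i ≠ i') (hij' : i ≠ j') (hji' : j ≠ i') (hjj' : j ≠ j') :
    MatchStep w (insert (i', j') M) (insert (i, j) (insert (i', j') M)) := by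
  have hS := matchedPos_insert i' j' M
  refine MatchStep.step ?_ hw (hj.mono ?_ ?_) hj1
  · simp [hS, hii', hij', hi]
  · rw [hS]; exact (subset_insert _ _).trans (subset_insert _ _)
  · simp [hS, hji', hjj', hj.1]

lemma matchStep_diamond (h₁ : MatchStep w M M₁) (h₂ : MatchStep w M M₂) :
    M₁ = M₂ ∨ ∃ M₃, MatchStep w M₁ M₃ ∧ MatchStep w M₂ M₃ := by
  cases h₁ with | @step i j hi hw hj hj1 =>
  cases h₂ with | @step i' j' hi' hw' hj' hj1' =>
  by_cases hii' : i = i'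
  · subst hii'
    rw [hj.unique hj']
    exact Or.inl rfl
  have hjj' : j ≠ j' := fun e => hii' (hj.inj (e ▸ hj') hi hi')
  have hji' : j ≠ i' := fun e => by simp [e, hw'] at hj1
  have hij' : i ≠ j' := fun e => by simp [← e, hw] at hj1'
  refine Or.inr ⟨insert (i', j') (insert (i, j) M), ?_, ?_⟩
  · exact matchStep_insert_of_ne hi' hw' hj' hj1' (Ne.symm hii') (Ne.symm hji')
      (Ne.symm hij') (Ne.symm hjj')
  · rw [insert_comm]
    exact matchStep_insert_of_ne hi hw hj hj1 hii' hij' hji' hjj'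

lemma IsMaximalMatching.unique (h₁ : IsMaximalMatching w M₁) (h₂ : IsMaximalMatching w M₂) :
    M₁ = M₂ := by
  have normal : ∀ {M M'}, IsMaximalMatching w M → ReflTransGen (MatchStep w) M M' → M = M' :=
    fun hM hMM' => hMM'.cases_head.elim id fun ⟨_, hs, _⟩ => (hM.2 _ hs).elim
  have confluent : ∀ a b c, MatchStep w a b → MatchStep w a c →
      ∃ d, ReflGen (MatchStep w) b d ∧ ReflTransGen (MatchStep w) c d := by
    intro a b c hab hac
    rcases matchStep_diamond hab hac with rfl | ⟨d, hbd, hcd⟩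
    · exact ⟨b, ReflGen.refl, ReflTransGen.refl⟩
    · exact ⟨d, ReflGen.single hbd, ReflTransGen.single hcd⟩
  obtain ⟨M₃, h₁₃, h₂₃⟩ := church_rosser confluent h₁.1 h₂.1
  exact (normal h₁ h₁₃).trans (normal h₂ h₂₃).symm

lemma exists_isMaximalMatching (w : Word m) : ∃ M, IsMaximalMatching w M := by
  classical
  obtain ⟨M, hM, hmax⟩ :=
    (univ.filter (ReflTransGen (MatchStep w) ∅)).exists_max_image card
      ⟨∅, by simp [ReflTransGen.refl]⟩
  simp only [mem_filter, mem_univ, true_and] at hM hmax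
  exact ⟨M, hM, fun M' hs => (hmax M' (hM.tail hs)).not_gt hs.card_lt⟩

lemma isMaximalMatching_matching (w : Word m) : IsMaximalMatching w (matching w) := by
  rw [matching, dif_pos (exists_isMaximalMatching w)]
  exact (exists_isMaximalMatching w).choose_spec

lemma IsMaximalMatching.matching_eq (h : IsMaximalMatching w M) : matching w = M :=
  (isMaximalMatching_matching w).unique h

end Matching

section MiddleRank

variable {m : ℕ} {w : Word m} {M : Finset (Fin m × Fin m)}

lemma card_matched_ones_eq_card_matched_zeros (h : ReflTransGen (MatchStep w) ∅ M) :
    ((matchedPos M).filter (w · = true)).card = ((matchedPos M).filter (w · = false)).card := by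
  induction h with
  | refl => rfl
  | tail _ hstep ih =>
    cases hstep with
    | step hi hw hj hj1 =>
      simp [matchedPos_insert, filter_insert, hw, hj1, hi, hj.1, ih]

lemma eq_true_of_notMem_matchedPos (hmax : ∀ M', ¬ MatchStep w M M') {q z : Fin m}
    (hq : q ∉ matchedPos M) (hwq : w q = true) (hz : z ∉ matchedPos M) : w z = true := by
  classical
  by_contra hwz
  obtain ⟨z₀, hz₀, hmin⟩ :=
    (univ.filter fun k => k ∉ matchedPos M ∧ w k = false).exists_min_image
      (fun k => ((q - k : Fin m) : ℕ))
      ⟨z, by simpa using ⟨hz, Bool.not_eq_true _ ▸ hwz⟩⟩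
  simp only [mem_filter, mem_univ, true_and, and_imp] at hz₀ hmin
  have hqz₀ : q ≠ z₀ := fun e => by simp [e, hz₀.2] at hwq
  obtain ⟨j, hj⟩ := exists_firstAfter hq hqz₀
  cases hwj : w j
  · have hsplit := Fin.val_sub_add_val_sub (hj.2.2 q hq hqz₀)
    have := Fin.val_sub_pos hj.2.1
    have := hmin j hj.1 hwj
    omega
  · exact hmax _ (MatchStep.step hz₀.1 hz₀.2 hj hwj)

lemma card_filter_eq_card_filter_add_card_filter_sdiff {α : Type*} [Fintype α] [DecidableEq α]
    (S : Finset α) (p : α → Prop) [DecidablePred p] :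
    (univ.filter p).card = (S.filter p).card + ((univ \ S).filter p).card := by
  rw [← card_union_of_disjoint (disjoint_filter_filter disjoint_sdiff), ← filter_union,
    union_sdiff_of_subset (subset_univ S)]

lemma wt_add_zeros (w : Word m) : wt w + zeros w = m := by
  simpa [wt, zeros] using card_filter_add_card_filter_not (s := univ) (fun i => w i = true)

lemma exists_unmatchedPos_eq_singleton (hw : 2 * wt w = m + 1) :
    ∃ p, unmatchedPos w = {p} ∧ w p = true := by
  classical
  obtain ⟨hreach, hmax⟩ := isMaximalMatching_matching w
  have hbal := card_matched_ones_eq_card_matched_zeros hreach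
  set S := matchedPos (matching w)
  have hU : unmatchedPos w = univ \ S := rfl
  have hones := card_filter_eq_card_filter_add_card_filter_sdiff S (w · = true)
  have hzeros := card_filter_eq_card_filter_add_card_filter_sdiff S (w · = false)
  have htot := wt_add_zeros w
  rw [wt] at hw htot
  rw [zeros] at htot
  obtain ⟨q, hq⟩ : ((univ \ S).filter (w · = true)).Nonempty := by
    rw [← card_pos]; omega
  rw [mem_filter, mem_sdiff] at hq
  have hall : ∀ z ∈ univ \ S, w z = true := fun z hz =>
    eq_true_of_notMem_matchedPos hmax hq.1.2 hq.2 (mem_sdiff.1 hz).2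
  have hno_zero : (univ \ S).filter (w · = false) = ∅ :=
    filter_eq_empty_iff.2 fun z hz => by simp [hall z hz]
  rw [filter_true_of_mem hall] at hones
  rw [hno_zero, card_empty] at hzeros
  obtain ⟨p, hp⟩ := card_eq_one.1 (show (univ \ S).card = 1 by omega)
  exact ⟨p, hU ▸ hp, hall p (hp ▸ mem_singleton_self p)⟩

end MiddleRank

section Update

variable {m : ℕ} {w : Word m} {M₀ M M' : Finset (Fin m × Fin m)} {p : Fin m}

lemma MatchStep.update (h : MatchStep w M M') (hp : p ∉ matchedPos M') (b : Bool) :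
    MatchStep (update w p b) M M' := by
  cases h with
  | step hi hw hj hj1 =>
    simp only [matchedPos_insert, mem_insert, not_or] at hp
    exact .step hi (by rwa [update_of_ne (Ne.symm hp.1)]) hj
      (by rwa [update_of_ne (Ne.symm hp.2.1)])

lemma reflTransGen_matchStep_update (h : ReflTransGen (MatchStep w) M₀ M)
    (hp : p ∉ matchedPos M) (b : Bool) : ReflTransGen (MatchStep (update w p b)) M₀ M := by
  induction h with
  | refl => rfl
  | tail _ hstep ih =>
    exact (ih fun h' => hp (hstep.matchedPos_subset h')).tail (hstep.update hp b)

lemma isMaximalMatching_update (hU : unmatchedPos w = {p}) (b : Bool) :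
    IsMaximalMatching (update w p b) (matching w) := by
  have hmem : ∀ x, x ∉ matchedPos (matching w) ↔ x = p := fun x => by
    rw [← mem_singleton, ← hU, unmatchedPos, mem_sdiff, and_iff_right (mem_univ x)]
  refine ⟨reflTransGen_matchStep_update (isMaximalMatching_matching w).1 ((hmem p).2 rfl) b, ?_⟩
  rintro _ ⟨hi, -, hj, -⟩
  exact hj.2.1 (((hmem _).1 hj.1).trans ((hmem _).1 hi).symm)

lemma matching_update (hU : unmatchedPos w = {p}) (b : Bool) :
    matching (update w p b) = matching w :=
  (isMaximalMatching_update hU b).matching_eq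

lemma unmatchedPos_update (hU : unmatchedPos w = {p}) (b : Bool) :
    unmatchedPos (update w p b) = {p} := by
  rw [unmatchedPos, matching_update hU]
  exact hU

lemma flipTop_eq_update (hU : unmatchedPos w = {p}) : flipTop w = update w p false := by
  rw [flipTop, dif_pos (hU ▸ singleton_nonempty p)]
  simp only [hU, max'_singleton]

end Update

lemma rot_zero (w : Word n) : rot 0 w = w := by
  funext j
  simp [rot]

lemma rot_update (r p : Fin n) (w : Word n) (b : Bool) :
    rot r (update w p b) = update (rot r w) (p + r) b := by
  funext j
  simp [rot, update_apply, sub_eq_iff_eq_add]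

lemma nec_rot (i : Fin n) (w : Word n) : nec (rot i w) = nec w :=
  (Quotient.sound (s := rotSetoid n) ⟨i, rfl⟩).symm

lemma wt_rot (i : Fin n) (w : Word n) : wt (rot i w) = wt w :=
  card_nbij' (· - i) (· + i)
    (fun x hx => by simpa [rot] using (mem_filter.1 (mem_coe.1 hx)).2)
    (fun x hx =>
      mem_coe.2 (mem_filter.2 ⟨mem_univ _, by simpa [rot] using (mem_filter.1 hx).2⟩))
    (fun x _ => sub_add_cancel x i)
    (fun x _ => add_sub_cancel_right x i)

lemma exists_rot_eq_lyndonOf (w : Word n) : ∃ i, rot i w = lyndonOf w := by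
  unfold lyndonOf
  split
  · exact ⟨_, rfl⟩
  · exact ⟨0, rot_zero w⟩

lemma nec_lyndonOf (w : Word n) : nec (lyndonOf w) = nec w := by
  obtain ⟨i, hi⟩ := exists_rot_eq_lyndonOf w
  rw [← hi, nec_rot]

lemma wt_lyndonOf (w : Word n) : wt (lyndonOf w) = wt w := by
  obtain ⟨i, hi⟩ := exists_rot_eq_lyndonOf w
  rw [← hi, wt_rot]

lemma nec_lyndonOf_out (v : Necklace n) : nec (lyndonOf v.out) = v := by
  rw [nec_lyndonOf]
  exact Quotient.out_eq v

section Rotation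

variable {w : Word n} {M M' : Finset (Fin n × Fin n)}

lemma FirstAfter.add_right {S : Finset (Fin n)} {i j : Fin n} (h : FirstAfter S i j)
    (r : Fin n) : FirstAfter (S.image (· + r)) (i + r) (j + r) := by
  have hinj := add_left_injective r
  refine ⟨fun hj => h.1 (hinj.mem_finset_image.1 hj), fun e => h.2.1 (add_right_cancel e),
    fun k hk hki => ?_⟩
  have := h.2.2 (k - r) (fun hkS => hk (by simpa using hinj.mem_finset_image.2 hkS))
    (fun e => hki (by rw [← e, sub_add_cancel]))
  rwa [add_sub_add_right_eq_sub, sub_add_eq_sub_sub_swap]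

lemma MatchStep.rot (h : MatchStep w M M') (r : Fin n) :
    MatchStep (rot r w) (M.image (Prod.map (· + r) (· + r)))
      (M'.image (Prod.map (· + r) (· + r))) := by
  cases h with
  | step hi hw hj hj1 =>
    have hrot : ∀ x, rot r w (x + r) = w x := fun x => by simp [rot]
    rw [image_insert]
    refine .step ?_ (by rwa [← hrot] at hw) ?_ (by rwa [← hrot] at hj1)
    · rw [matchedPos_image_prodMap]
      exact fun h => hi ((add_left_injective r).mem_finset_image.1 h)
    · rw [matchedPos_image_prodMap]
      exact hj.add_right r

lemma reflTransGen_matchStep_rot (h : ReflTransGen (MatchStep w) M M') (r : Fin n) :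
    ReflTransGen (MatchStep (rot r w)) (M.image (Prod.map (· + r) (· + r)))
      (M'.image (Prod.map (· + r) (· + r))) := by
  induction h with
  | refl => rfl
  | tail _ hstep ih => exact ih.tail (hstep.rot r)

lemma IsMaximalMatching.rot (h : IsMaximalMatching w M) (r : Fin n) :
    IsMaximalMatching (rot r w) (M.image (Prod.map (· + r) (· + r))) := by
  refine ⟨by simpa using reflTransGen_matchStep_rot h.1 r,
    fun M' hs => h.2 (M'.image (Prod.map (· + -r) (· + -r))) ?_⟩
  simpa [rot_rot, image_image, Prod.map_map, Function.comp_def, rot_zero] using hs.rot (-r)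

end Rotation

lemma matching_rot (r : Fin n) (w : Word n) :
    matching (rot r w) = (matching w).image (Prod.map (· + r) (· + r)) :=
  ((isMaximalMatching_matching w).rot r).matching_eq

lemma unmatchedPos_rot (r : Fin n) (w : Word n) :
    unmatchedPos (rot r w) = (unmatchedPos w).image (· + r) := by
  rw [unmatchedPos, unmatchedPos, matching_rot, matchedPos_image_prodMap,
    image_sdiff _ _ (add_left_injective r), image_univ_of_surjective (add_right_surjective r)]

lemma nec_eq_of_nec_update_eq {w w' : Word n} {p p' : Fin n}
    (hU : unmatchedPos w = {p}) (hwp : w p = true)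
    (hU' : unmatchedPos w' = {p'}) (hwp' : w' p' = true)
    (h : nec (update w p false) = nec (update w' p' false)) : nec w = nec w' := by
  obtain ⟨r, hr⟩ := Quotient.exact h
  have hpr : p + r = p' := by
    have := unmatchedPos_rot r (update w p false)
    rw [hr, unmatchedPos_update hU', unmatchedPos_update hU, image_singleton] at this
    exact (singleton_injective this).symm
  rw [rot_update, hpr] at hr
  subst hpr
  have hp' : rot r w (p + r) = w' (p + r) := by simp [rot, hwp, hwp']
  have hrw : rot r w = w' := by
    rw [← update_eq_self (p + r) (rot r w), ← update_idem false, hr, hp', update_idem,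
      update_eq_self]
  rw [← hrw, nec_rot]

theorem phi_injective_middle_ranks_general (n : ℕ) [NeZero n]
    (u : Necklace n) (hu : 2 * rank u = n + 1) :
    (∃ p : Fin n,
      unmatchedPos (lyndonOf (Quotient.out u)) = {p} ∧
      lyndonOf (Quotient.out u) p = true ∧
      matching (Function.update (lyndonOf (Quotient.out u)) p false) =
        matching (lyndonOf (Quotient.out u)) ∧
      unmatchedPos (Function.update (lyndonOf (Quotient.out u)) p false) = {p} ∧
      Function.update (lyndonOf (Quotient.out u)) p false p = false ∧
      nec (Function.update (lyndonOf (Quotient.out u)) p false) = phi u) ∧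
    (∀ u' : Necklace n, 2 * rank u' = n + 1 → phi u' = phi u → u' = u) := by
  have hmiddle : ∀ v : Necklace n, 2 * rank v = n + 1 →
      ∃ p, unmatchedPos (lyndonOf v.out) = {p} ∧ lyndonOf v.out p = true := fun v hv =>
    exists_unmatchedPos_eq_singleton (by rwa [wt_lyndonOf])
  have hphi : ∀ {v : Necklace n} {p}, unmatchedPos (lyndonOf v.out) = {p} →
      phi v = nec (update (lyndonOf v.out) p false) := fun hU => by
    rw [phi, flipTop_eq_update hU]
  obtain ⟨p, hU, hwp⟩ := hmiddle u hu
  refine ⟨⟨p, hU, hwp, matching_update hU false, unmatchedPos_update hU false,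
    update_self .., (hphi hU).symm⟩, fun u' hu' h => ?_⟩
  obtain ⟨p', hU', hwp'⟩ := hmiddle u' hu'
  calc u' = nec (lyndonOf u'.out) := (nec_lyndonOf_out u').symm
    _ = nec (lyndonOf u.out) :=
      nec_eq_of_nec_update_eq hU' hwp' hU hwp (by rw [← hphi hU', ← hphi hU, h])
    _ = u := nec_lyndonOf_out u

/-- Let `n` be odd and `u` a necklace of rank `(n+1)/2` with Lyndon
rearrangement `w`.  Then `w` has exactly one unmatched position `p`, carrying a `1`; the
word obtained from `w` by changing position `p` to `0` (a representative of `φ(u)`) has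
the same matched pairs as `w` and has `p` as its unique unmatched position, now carrying
a `0`.  Consequently `φ` is injective on the necklaces of rank `(n+1)/2`. -/
theorem phi_injective_middle_ranks (n : ℕ) [NeZero n] (hodd : Odd n)
    (u : Necklace n) (hu : 2 * rank u = n + 1) :
    (∃ p : Fin n,
      unmatchedPos (lyndonOf (Quotient.out u)) = {p} ∧
      lyndonOf (Quotient.out u) p = true ∧
      matching (Function.update (lyndonOf (Quotient.out u)) p false) =
        matching (lyndonOf (Quotient.out u)) ∧
      unmatchedPos (Function.update (lyndonOf (Quotient.out u)) p false) = {p} ∧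
      Function.update (lyndonOf (Quotient.out u)) p false p = false ∧
      nec (Function.update (lyndonOf (Quotient.out u)) p false) = phi u) ∧
    (∀ u' : Necklace n, 2 * rank u' = n + 1 → phi u' = phi u → u' = u) :=
  phi_injective_middle_ranks_general n u hu
end
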